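/- Let 0<λ<1 and b∈D. Define F_b(z) = (1-|b|^2)(1-b̄ z)^{(λ-3)/2}. Then there is a constant C depending only on λ such that sup_{a∈D}(1-|a|^2)^{1-λ}∫_D |F_b'(z)|^2(1-|φ_a(z)|^2)dm(z) ≤ C. -/

import Mathlib

open MeasureTheory Real Set Filter Topology

noncomputable section

/-- The open unit disk in ℂ. -/
def UD : Set ℂ := Metric.ball 0 1

/-- The Möbius map φ_a(z) = (a - z)/(1 - ā z). -/
def moeb (a z : ℂ) : ℂ := (a - z) / (1 - (starRingEnd ℂ) a * z)

/-- The Morrey quantity (1-|a|²)^{1-λ} ∫_D |f'(z)|² (1-|φ_a(z)|²) dm(z),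
with dm normalized area measure (1/π)·(Lebesgue measure). -/
def morreyInt (lam : ℝ) (f : ℂ → ℂ) (a : ℂ) : ℝ :=
  (1 - ‖a‖ ^ 2) ^ (1 - lam) *
    (π⁻¹ * ∫ z in UD, ‖deriv f z‖ ^ 2 * (1 - ‖moeb a z‖ ^ 2))

/-!
Write `w = 1 - b̄z`. Then `|F_b'(z)|² = (1-|b|²)² ((3-λ)/2)² |b|² |w|^(λ-5)`. Since `1-|a|²` and
`1-|z|²` are both at most `2|1-āz|`, and `1-|z|² ≤ 2|w|`, the weight
`(1-|a|²)^(1-λ) (1-|φ_a(z)|²)` is at most `8|w|^(1-λ)`; so the integrand is at most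
`18 (1-|b|²)²/|w|⁴ = 18 |φ_b'(z)|²`. By the area formula `∫_D |φ_b'|² = area (φ_b(D)) = π`,
because `φ_b` is an involution of `D`. Hence `C = 18`.
-/
open ComplexConjugate

lemma mem_UD {z : ℂ} : z ∈ UD ↔ ‖z‖ < 1 := by
  simp [UD]

lemma measurableSet_UD : MeasurableSet UD := measurableSet_ball

lemma one_sub_norm_mul_norm_le_norm_one_sub_conj_mul (a z : ℂ) :
    1 - ‖a‖ * ‖z‖ ≤ ‖1 - conj a * z‖ := by
  simpa [norm_mul] using norm_sub_norm_le (1 : ℂ) (conj a * z)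

lemma one_sub_conj_mul_ne_zero {a z : ℂ} (h : ‖a‖ * ‖z‖ < 1) : 1 - conj a * z ≠ 0 := by
  intro h0
  have := one_sub_norm_mul_norm_le_norm_one_sub_conj_mul a z
  rw [h0, norm_zero] at this
  linarith

lemma one_sub_conj_mul_ne_zero_of_lt_of_le {a z : ℂ} (ha : ‖a‖ < 1) (hz : ‖z‖ ≤ 1) :
    1 - conj a * z ≠ 0 :=
  one_sub_conj_mul_ne_zero (mul_lt_one_of_nonneg_of_lt_one_left (norm_nonneg a) ha hz)

lemma norm_one_sub_conj_mul_comm (a z : ℂ) : ‖1 - conj a * z‖ = ‖1 - conj z * a‖ := by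
  rw [← Complex.norm_conj (1 - conj z * a)]
  simp [mul_comm]

lemma one_sub_norm_sq_le_two_mul_norm_one_sub_conj_mul {a z : ℂ} (ha : ‖a‖ ≤ 1) (hz : ‖z‖ ≤ 1) :
    1 - ‖z‖ ^ 2 ≤ 2 * ‖1 - conj a * z‖ := by
  nlinarith [one_sub_norm_mul_norm_le_norm_one_sub_conj_mul a z, norm_nonneg a, norm_nonneg z]

lemma one_sub_norm_moeb_sq {a z : ℂ} (h : 1 - conj a * z ≠ 0) :
    1 - ‖moeb a z‖ ^ 2 = (1 - ‖a‖ ^ 2) * (1 - ‖z‖ ^ 2) / ‖1 - conj a * z‖ ^ 2 := by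
  have hN : ‖1 - conj a * z‖ ^ 2 ≠ 0 := by positivity
  rw [moeb, norm_div, div_pow, eq_div_iff hN, sub_mul, div_mul_cancel₀ _ hN, one_mul]
  simp only [← Complex.normSq_eq_norm_sq, Complex.normSq_apply, Complex.sub_re, Complex.sub_im,
    Complex.one_re, Complex.one_im, Complex.mul_re, Complex.mul_im, Complex.conj_re,
    Complex.conj_im]
  ring

lemma moeb_moeb {a z : ℂ} (ha : ‖a‖ < 1) (h : 1 - conj a * z ≠ 0) : moeb a (moeb a z) = z := by
  have ha' : 1 - conj a * a ≠ 0 := one_sub_conj_mul_ne_zero (by nlinarith [norm_nonneg a])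
  have num : a - moeb a z = z * (1 - conj a * a) / (1 - conj a * z) := by
    rw [moeb, eq_div_iff h, sub_mul, div_mul_cancel₀ _ h]; ring
  have den : 1 - conj a * moeb a z = (1 - conj a * a) / (1 - conj a * z) := by
    rw [moeb, eq_div_iff h, sub_mul, mul_div_assoc', div_mul_cancel₀ _ h]; ring
  rw [moeb, num, den, div_div_div_cancel_right₀ h, mul_div_cancel_right₀ _ ha']

lemma mapsTo_moeb_UD {a : ℂ} (ha : ‖a‖ < 1) : MapsTo (moeb a) UD UD := by
  intro z hz
  rw [mem_UD] at hz ⊢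
  have hden := one_sub_conj_mul_ne_zero_of_lt_of_le ha hz.le
  have hpos : 0 < 1 - ‖moeb a z‖ ^ 2 := by
    rw [one_sub_norm_moeb_sq hden]
    have : 0 < 1 - ‖a‖ ^ 2 := by nlinarith [norm_nonneg a]
    have : 0 < 1 - ‖z‖ ^ 2 := by nlinarith [norm_nonneg z]
    positivity
  nlinarith [norm_nonneg (moeb a z)]

lemma moeb_moeb_of_mem_UD {a z : ℂ} (ha : ‖a‖ < 1) (hz : z ∈ UD) : moeb a (moeb a z) = z :=
  moeb_moeb ha (one_sub_conj_mul_ne_zero_of_lt_of_le ha (mem_UD.1 hz).le)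

lemma image_moeb_UD {a : ℂ} (ha : ‖a‖ < 1) : moeb a '' UD = UD :=
  (mapsTo_moeb_UD ha).image_subset.antisymm fun z hz =>
    ⟨moeb a z, mapsTo_moeb_UD ha hz, moeb_moeb_of_mem_UD ha hz⟩

lemma injOn_moeb_UD {a : ℂ} (ha : ‖a‖ < 1) : InjOn (moeb a) UD := fun z hz w hw h => by
  rw [← moeb_moeb_of_mem_UD ha hz, h, moeb_moeb_of_mem_UD ha hw]

lemma hasDerivAt_moeb {a z : ℂ} (h : 1 - conj a * z ≠ 0) :
    HasDerivAt (moeb a) ((conj a * a - 1) / (1 - conj a * z) ^ 2) z := by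
  have hnum : HasDerivAt (fun z => a - z) (-1) z := by
    simpa using (hasDerivAt_id z).const_sub a
  have hden : HasDerivAt (fun z => 1 - conj a * z) (-conj a) z := by
    simpa using ((hasDerivAt_id z).const_mul (conj a)).const_sub 1
  exact (hnum.div hden h).congr_deriv (by ring)

def moebJacobian (a z : ℂ) : ℝ := ((1 - ‖a‖ ^ 2) / ‖1 - conj a * z‖ ^ 2) ^ 2

lemma sq_norm_deriv_moeb (a z : ℂ) :
    ‖(conj a * a - 1) / (1 - conj a * z) ^ 2‖ ^ 2 = moebJacobian a z := by
  rw [moebJacobian, Complex.conj_mul', norm_div, norm_pow, div_pow, div_pow]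
  norm_cast
  rw [Real.norm_eq_abs, sq_abs]
  ring

lemma det_restrictScalars_toSpanSingleton (w : ℂ) :
    ((ContinuousLinearMap.toSpanSingleton ℂ w).restrictScalars ℝ).det = ‖w‖ ^ 2 := by
  simp [ContinuousLinearMap.det, LinearMap.det_restrictScalars,
      Algebra.norm_complex_eq, Complex.normSq_eq_norm_sq]

lemma lintegral_norm_deriv_sq_eq_volume_image {f f' : ℂ → ℂ} {s : Set ℂ} (hs : MeasurableSet s)
    (hf' : ∀ z ∈ s, HasDerivWithinAt f (f' z) s z) (hf : Set.InjOn f s) :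
    ∫⁻ z in s, ENNReal.ofReal (‖f' z‖ ^ 2) = volume (f '' s) := by
  rw [← lintegral_abs_det_fderiv_eq_addHaar_image volume hs
    (fun z hz => ((hf' z hz).hasFDerivWithinAt).restrictScalars ℝ) hf]
  simp only [det_restrictScalars_toSpanSingleton, abs_pow, abs_norm]

lemma lintegral_moebJacobian {a : ℂ} (ha : ‖a‖ < 1) :
    ∫⁻ z in UD, ENNReal.ofReal (moebJacobian a z) = volume UD := by
  have hderiv : ∀ z ∈ UD,
      HasDerivWithinAt (moeb a) ((conj a * a - 1) / (1 - conj a * z) ^ 2) UD z := fun z hz =>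
    (hasDerivAt_moeb (one_sub_conj_mul_ne_zero_of_lt_of_le ha (mem_UD.1 hz).le)).hasDerivWithinAt
  simp_rw [← sq_norm_deriv_moeb a]
  rw [lintegral_norm_deriv_sq_eq_volume_image measurableSet_UD hderiv (injOn_moeb_UD ha),
    image_moeb_UD ha]

lemma moebJacobian_nonneg (a z : ℂ) : 0 ≤ moebJacobian a z := sq_nonneg _

lemma integrableOn_moebJacobian {a : ℂ} (ha : ‖a‖ < 1) : IntegrableOn (moebJacobian a) UD := by
  have hmeas : Measurable (moebJacobian a) := by unfold moebJacobian; fun_prop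
  refine ⟨hmeas.aestronglyMeasurable, ?_⟩
  rw [hasFiniteIntegral_iff_ofReal (ae_of_all _ (moebJacobian_nonneg a)),
    lintegral_moebJacobian ha]
  exact measure_ball_lt_top

lemma integral_moebJacobian {a : ℂ} (ha : ‖a‖ < 1) : ∫ z in UD, moebJacobian a z = π := by
  rw [integral_eq_lintegral_of_nonneg_ae (ae_of_all _ (moebJacobian_nonneg a))
    (integrableOn_moebJacobian ha).aestronglyMeasurable, lintegral_moebJacobian ha]
  simp [UD]

lemma rpow_one_sub_mul_one_sub_norm_moeb_sq_le {lam : ℝ} (h0 : 0 ≤ lam) (h2 : lam ≤ 2)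
    {a z : ℂ} (ha : ‖a‖ < 1) (hz : ‖z‖ < 1) :
    (1 - ‖a‖ ^ 2) ^ (1 - lam) * (1 - ‖moeb a z‖ ^ 2) ≤ 4 * (1 - ‖z‖ ^ 2) ^ (1 - lam) := by
  have hden := one_sub_conj_mul_ne_zero_of_lt_of_le ha hz.le
  have hαS := one_sub_norm_sq_le_two_mul_norm_one_sub_conj_mul hz.le ha.le
  rw [← norm_one_sub_conj_mul_comm] at hαS
  have hζS := one_sub_norm_sq_le_two_mul_norm_one_sub_conj_mul ha.le hz.le
  set S := ‖1 - conj a * z‖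
  set α := 1 - ‖a‖ ^ 2
  set ζ := 1 - ‖z‖ ^ 2
  have hS : 0 < S := norm_pos_iff.2 hden
  have hα : 0 < α := by nlinarith [norm_nonneg a]
  have hζ : 0 < ζ := by nlinarith [norm_nonneg z]
  -- `α^(1-λ) · αζ/S² = (α/S)^(2-λ) (ζ/S)^λ ζ^(1-λ)`, and both ratios are at most 2.
  have split : α ^ (1 - lam) * (α * ζ / S ^ 2)
      = (α / S) ^ (2 - lam) * (ζ / S) ^ lam * ζ ^ (1 - lam) := by
    have hαpow : α ^ (2 - lam) = α ^ (1 - lam) * α := by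
      rw [show 2 - lam = (1 - lam) + 1 by ring, Real.rpow_add_one hα.ne']
    have hζpow : ζ ^ lam * ζ ^ (1 - lam) = ζ := by
      rw [← Real.rpow_add hζ]; simp
    have hSpow : S ^ (2 - lam) * S ^ lam = S ^ 2 := by
      rw [← Real.rpow_add hS]; norm_num
    rw [Real.div_rpow hα.le hS.le, Real.div_rpow hζ.le hS.le, hαpow,
      show α ^ (1 - lam) * α / S ^ (2 - lam) * (ζ ^ lam / S ^ lam) * ζ ^ (1 - lam)
        = α ^ (1 - lam) * α * (ζ ^ lam * ζ ^ (1 - lam)) / (S ^ (2 - lam) * S ^ lam) by ring,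
      hζpow, hSpow]
    ring
  rw [one_sub_norm_moeb_sq hden, split]
  calc (α / S) ^ (2 - lam) * (ζ / S) ^ lam * ζ ^ (1 - lam)
      ≤ 2 ^ (2 - lam) * 2 ^ lam * ζ ^ (1 - lam) := by
        gcongr <;> rwa [div_le_iff₀ hS]
    _ = 4 * ζ ^ (1 - lam) := by
        rw [← Real.rpow_add two_pos]; norm_num

lemma one_sub_norm_sq_rpow_le {p : ℝ} (hp0 : 0 ≤ p) (hp1 : p ≤ 1) {b z : ℂ} (hb : ‖b‖ ≤ 1)
    (hz : ‖z‖ ≤ 1) : (1 - ‖z‖ ^ 2) ^ p ≤ 2 * ‖1 - conj b * z‖ ^ p := by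
  calc (1 - ‖z‖ ^ 2) ^ p ≤ (2 * ‖1 - conj b * z‖) ^ p :=
        Real.rpow_le_rpow (by nlinarith [norm_nonneg z])
          (one_sub_norm_sq_le_two_mul_norm_one_sub_conj_mul hb hz) hp0
    _ = 2 ^ p * ‖1 - conj b * z‖ ^ p := Real.mul_rpow zero_le_two (norm_nonneg _)
    _ ≤ 2 * ‖1 - conj b * z‖ ^ p := by
        gcongr
        exact Real.rpow_le_self_of_one_le one_le_two hp1

lemma norm_deriv_const_mul_one_sub_conj_mul_cpow (c : ℂ) (p : ℝ) {b z : ℂ}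
    (h : ‖b‖ * ‖z‖ < 1) :
    ‖deriv (fun z => c * (1 - conj b * z) ^ (p : ℂ)) z‖
      = ‖c‖ * |p| * ‖1 - conj b * z‖ ^ (p - 1) * ‖b‖ := by
  have hre : 0 < (1 - conj b * z).re := by
    have := Complex.re_le_norm (conj b * z)
    rw [norm_mul, Complex.norm_conj] at this
    simp only [Complex.sub_re, Complex.one_re]
    linarith
  have hlin : HasDerivAt (fun z => 1 - conj b * z) (-conj b) z := by
    simpa using ((hasDerivAt_id z).const_mul (conj b)).const_sub 1
  rw [((hlin.cpow_const (Complex.mem_slitPlane_iff.2 (Or.inl hre))).const_mul c).deriv,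
    show (p : ℂ) - 1 = ((p - 1 : ℝ) : ℂ) by push_cast; ring]
  simp only [norm_mul, norm_neg, Complex.norm_conj, Complex.norm_real, Real.norm_eq_abs,
    Complex.norm_cpow_real]
  ring

def testFn (lam : ℝ) (b z : ℂ) : ℂ :=
  ((1 - ‖b‖ ^ 2 : ℝ) : ℂ) * (1 - conj b * z) ^ (((lam : ℂ) - 3) / 2)

lemma norm_deriv_testFn {lam : ℝ} (h3 : lam ≤ 3) {b z : ℂ} (hb : ‖b‖ ≤ 1)
    (hbz : ‖b‖ * ‖z‖ < 1) :
    ‖deriv (testFn lam b) z‖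
      = (1 - ‖b‖ ^ 2) * ((3 - lam) / 2) * ‖1 - conj b * z‖ ^ ((lam - 3) / 2 - 1) * ‖b‖ := by
  unfold testFn
  rw [show ((lam : ℂ) - 3) / 2 = (((lam - 3) / 2 : ℝ) : ℂ) by push_cast; ring,
    norm_deriv_const_mul_one_sub_conj_mul_cpow _ _ hbz, Complex.norm_real, Real.norm_eq_abs,
    abs_of_nonneg (by nlinarith [norm_nonneg b]), abs_of_nonpos (by linarith)]
  ring

lemma morrey_integrand_testFn_le {lam : ℝ} (h0 : 0 ≤ lam) (h1 : lam ≤ 1) {a b z : ℂ}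
    (ha : ‖a‖ < 1) (hb : ‖b‖ < 1) (hz : ‖z‖ < 1) :
    (1 - ‖a‖ ^ 2) ^ (1 - lam) * (‖deriv (testFn lam b) z‖ ^ 2 * (1 - ‖moeb a z‖ ^ 2))
      ≤ 18 * moebJacobian b z := by
  have hbz : ‖b‖ * ‖z‖ < 1 := mul_lt_one_of_nonneg_of_lt_one_left (norm_nonneg b) hb hz.le
  have hderiv := norm_deriv_testFn (by linarith : lam ≤ 3) hb.le hbz
  set w := ‖1 - conj b * z‖ with hw_def
  have hw : 0 < w := norm_pos_iff.2 (one_sub_conj_mul_ne_zero hbz)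
  have hweight : (1 - ‖a‖ ^ 2) ^ (1 - lam) * (1 - ‖moeb a z‖ ^ 2) ≤ 8 * w ^ (1 - lam) := by
    linarith [rpow_one_sub_mul_one_sub_norm_moeb_sq_le h0 (by linarith) ha hz,
      one_sub_norm_sq_rpow_le (by linarith : 0 ≤ 1 - lam) (by linarith) hb.le hz.le (b := b)]
  have hpow : (w ^ ((lam - 3) / 2 - 1)) ^ 2 * w ^ (1 - lam) = ((w ^ 2) ^ 2)⁻¹ := by
    rw [← Real.rpow_natCast, ← Real.rpow_mul hw.le, ← Real.rpow_add hw,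
      show ((lam - 3) / 2 - 1) * ((2 : ℕ) : ℝ) + (1 - lam) = -((4 : ℕ) : ℝ) by push_cast; ring,
      Real.rpow_neg hw.le, Real.rpow_natCast]
    ring
  calc _ = ‖deriv (testFn lam b) z‖ ^ 2 *
          ((1 - ‖a‖ ^ 2) ^ (1 - lam) * (1 - ‖moeb a z‖ ^ 2)) := by ring
    _ ≤ ‖deriv (testFn lam b) z‖ ^ 2 * (8 * w ^ (1 - lam)) := by gcongr
    _ = 8 * ((3 - lam) / 2) ^ 2 * ‖b‖ ^ 2 * moebJacobian b z := by
        rw [moebJacobian, ← hw_def, hderiv, div_pow (1 - ‖b‖ ^ 2), div_eq_mul_inv _ ((w ^ 2) ^ 2),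
          ← hpow]
        ring
    _ ≤ 18 * moebJacobian b z := by
        refine mul_le_mul_of_nonneg_right ?_ (moebJacobian_nonneg b z)
        have hq : ((3 - lam) / 2) ^ 2 ≤ 9 / 4 := by nlinarith
        have hb2 : ‖b‖ ^ 2 ≤ 1 := by nlinarith [norm_nonneg b]
        nlinarith [mul_le_mul hq hb2 (sq_nonneg _) (by norm_num)]

lemma morreyInt_testFn_le {lam : ℝ} (h0 : 0 ≤ lam) (h1 : lam ≤ 1) {a b : ℂ} (ha : ‖a‖ < 1)
    (hb : ‖b‖ < 1) : morreyInt lam (testFn lam b) a ≤ 18 := by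
  have hnonneg : ∀ z ∈ UD,
      0 ≤ (1 - ‖a‖ ^ 2) ^ (1 - lam) * (‖deriv (testFn lam b) z‖ ^ 2 * (1 - ‖moeb a z‖ ^ 2)) := by
    intro z hz
    have hα : 0 ≤ 1 - ‖a‖ ^ 2 := by nlinarith [norm_nonneg a]
    have hmoeb := mem_UD.1 (mapsTo_moeb_UD ha hz)
    have : 0 ≤ 1 - ‖moeb a z‖ ^ 2 := by nlinarith [norm_nonneg (moeb a z)]
    positivity
  have hle : ∀ z ∈ UD, (1 - ‖a‖ ^ 2) ^ (1 - lam) *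
      (‖deriv (testFn lam b) z‖ ^ 2 * (1 - ‖moeb a z‖ ^ 2)) ≤ 18 * moebJacobian b z :=
    fun z hz => morrey_integrand_testFn_le h0 h1 ha hb (mem_UD.1 hz)
  calc _ = π⁻¹ * ∫ z in UD, (1 - ‖a‖ ^ 2) ^ (1 - lam) *
          (‖deriv (testFn lam b) z‖ ^ 2 * (1 - ‖moeb a z‖ ^ 2)) := by
        rw [morreyInt, integral_const_mul]; ring
    _ ≤ π⁻¹ * ∫ z in UD, 18 * moebJacobian b z := by
        gcongr π⁻¹ * ?_
        exact integral_mono_of_nonneg (ae_restrict_of_forall_mem measurableSet_UD hnonneg)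
          ((integrableOn_moebJacobian hb).const_mul 18)
          (ae_restrict_of_forall_mem measurableSet_UD hle)
    _ = 18 := by
        rw [integral_const_mul, integral_moebJacobian hb]
        field_simp

/-- the test functions F_b(z) = (1-|b|²)(1-b̄z)^{(λ-3)/2} have
Morrey seminorms bounded by a constant depending only on λ. -/
theorem stmt5 (lam : ℝ) (h0 : 0 < lam) (h1 : lam < 1) :
    ∃ C : ℝ, ∀ b ∈ UD, ∀ a ∈ UD,
      morreyInt lam
        (fun z => ((1 - ‖b‖ ^ 2 : ℝ) : ℂ) *
          (1 - (starRingEnd ℂ) b * z) ^ (((lam : ℂ) - 3) / 2)) a ≤ C :=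
  ⟨18, fun _ hb _ ha => morreyInt_testFn_le h0.le h1.le (mem_UD.1 ha) (mem_UD.1 hb)⟩
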